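/- arXiv:2005.03441 — 9 statements merged into one kernel-verified Lean document; each statement's English description precedes it below -/
import Mathlib

section
/- For every fixed integer k ≥ 5 and every natural number n, there exists a k-vertex-critical graph G that is 2P2-free (and hence also P5-free) with more than n vertices. In particular, there are infinitely many k-vertex-critical (P5,2P2)-free graphs. -/
open SimpleGraph

/-- `SGFree G H` means `G` contains no induced subgraph isomorphic to `H`,
i.e. `G` is `H`-free. -/
def SGFree {V : Type*} {W : Type*} (G : SimpleGraph V) (H : SimpleGraph W) : Prop :=
  IsEmpty (H ↪g G)

/-- `G` is `k`-vertex-critical: `χ(G) = k` and `χ(G - v) < k` for every vertex `v`. -/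
def IsKVertexCritical {V : Type*} (G : SimpleGraph V) (k : ℕ) : Prop :=
  G.chromaticNumber = (k : ℕ∞) ∧
    ∀ v : V, (G.induce ({v}ᶜ : Set V)).chromaticNumber < (k : ℕ∞)

/-- `2P2`: the disjoint union of two edges, on 4 vertices. -/
def twoP2 : SimpleGraph (Fin 4) := fromEdgeSet {s(0,1), s(2,3)}

/-- `P1 + K3`: the disjoint union of a vertex and a triangle. -/
def P1K3 : SimpleGraph (Fin 4) := fromEdgeSet {s(1,2), s(1,3), s(2,3)}

/-- `P2 + 2P1`: the disjoint union of an edge and two isolated vertices. -/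
def P2plus2P1 : SimpleGraph (Fin 4) := fromEdgeSet {s(0,1)}

/-- `P1 + P3`: the disjoint union of a vertex and a path on 3 vertices. -/
def P1P3 : SimpleGraph (Fin 4) := fromEdgeSet {s(1,2), s(2,3)}

/-- The diamond: `K4` minus an edge. -/
def diamond : SimpleGraph (Fin 4) := fromEdgeSet {s(0,2), s(0,3), s(1,2), s(1,3), s(2,3)}

/-- The 5-wheel `W5`: a 5-cycle plus a vertex adjacent to all five cycle vertices. -/
def W5 : SimpleGraph (Fin 6) :=
  fromEdgeSet {s(0,1), s(1,2), s(2,3), s(3,4), s(4,0), s(5,0), s(5,1), s(5,2), s(5,3), s(5,4)}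

/-- The graph `F`: a 5-cycle plus a vertex adjacent to exactly four of the cycle vertices. -/
def Fgraph : SimpleGraph (Fin 6) :=
  fromEdgeSet {s(0,1), s(1,2), s(2,3), s(3,4), s(4,0), s(5,0), s(5,1), s(5,2), s(5,3)}

/-!
The graph is the complement of the `(q-1)`-st power of the cycle on `N = (k-1)q + 1` vertices:
residues mod `N` are adjacent when their circular distance is at least `q`. An independent set
lies within `q` consecutive residues, so has at most `q` vertices, and `(k-1)q < N` forces
`k` colours; cutting the circle into arcs of length `q` gives a `k`-colouring, and once a vertex
`v` is removed the remaining `(k-1)q` vertices, read from `v + 1` on, fill exactly `k-1` arcs.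
An induced `2P2` would consist of two far pairs whose four cross pairs are all close; lifting
the four points to integers near one of them turns this into an impossible integer configuration.
Since `P5` contains an induced `2P2`, the graph is also `P5`-free, and `q` can be taken as large
as we like.
-/

theorem Int.card_le_of_pairwise_natAbs_sub_lt {q : ℕ} (T : Finset ℤ)
    (hT : ∀ x ∈ T, ∀ y ∈ T, (x - y).natAbs < q) : T.card ≤ q := by
  rcases T.eq_empty_or_nonempty with rfl | hne
  · simp
  have hsub : T ⊆ Finset.Ico (T.min' hne) (T.min' hne + q) := fun x hx => by
    have := T.min'_le x hx
    have := hT x hx _ (T.min'_mem hne)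
    rw [Finset.mem_Ico]
    omega
  simpa using Finset.card_le_card hsub

namespace ZMod

def circDist {N : ℕ} (x y : ZMod N) : ℕ := (x - y).valMinAbs.natAbs

variable {N q : ℕ}

theorem circDist_sub_right (x y t : ZMod N) : circDist (x - t) (y - t) = circDist x y := by
  rw [circDist, circDist, sub_sub_sub_cancel_right]

theorem val_lt_of_ne_neg_one {z : ZMod (N + 1)} (h : z ≠ -1) : z.val < N := by
  have : z.val ≠ N := fun hz => h (val_injective _ (hz.trans (val_neg_one N).symm))
  have := z.val_lt
  omega

variable [NeZero N]

theorem valMinAbs_eq_of_intCast_eq {z : ZMod N} {m : ℤ} (h : (m : ZMod N) = z)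
    (hm : 2 * m.natAbs < N) : z.valMinAbs = m :=
  (valMinAbs_spec z m).2 ⟨h.symm, by constructor <;> omega⟩

theorem circDist_le_natAbs {x y : ZMod N} {m : ℤ} (h : (m : ZMod N) = x - y) :
    circDist x y ≤ m.natAbs :=
  natAbs_min_of_le_div_two N _ m (by rw [coe_valMinAbs, h]) (natAbs_valMinAbs_le _)

theorem circDist_lt_of_val_div_eq (hq : 0 < q) {x y : ZMod N} (h : x.val / q = y.val / q) :
    circDist x y < q := by
  have hxy : (((x.val : ℤ) - y.val : ℤ) : ZMod N) = x - y := by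
    push_cast; rw [natCast_zmod_val, natCast_zmod_val]
  have := circDist_le_natAbs hxy
  have := Nat.div_add_mod x.val q
  have := Nat.div_add_mod y.val q
  have := Nat.mod_lt x.val hq
  have := Nat.mod_lt y.val hq
  rw [h] at *
  omega

theorem le_circDist_of_two_far_pairs (hN : 4 * q < N) {a b c d : ZMod N}
    (hab : q ≤ circDist a b) (hcd : q ≤ circDist c d) (hac : circDist a c < q)
    (had : circDist a d < q) (hbc : circDist b c < q) : q ≤ circDist b d := by
  unfold circDist at *
  by_contra! hbd
  have hab₁ := valMinAbs_eq_of_intCast_eq (z := a - b)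
    (m := (a - c).valMinAbs - (b - c).valMinAbs) (by push_cast; ring)
    (by omega)
  have hab₂ := valMinAbs_eq_of_intCast_eq (z := a - b)
    (m := (a - d).valMinAbs - (b - d).valMinAbs) (by push_cast; ring)
    (by omega)
  have hcd₁ := valMinAbs_eq_of_intCast_eq (z := c - d)
    (m := (a - d).valMinAbs - (a - c).valMinAbs) (by push_cast; ring)
    (by omega)
  omega

theorem card_le_of_pairwise_circDist_lt (hN : 4 * q < N) (S : Finset (ZMod N))
    (hS : ∀ x ∈ S, ∀ y ∈ S, circDist x y < q) : S.card ≤ q := by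
  rcases S.eq_empty_or_nonempty with rfl | ⟨a, ha⟩
  · simp
  set f : ZMod N → ℤ := fun x => (x - a).valMinAbs
  have hf : ∀ x ∈ S, ∀ y ∈ S, (f x - f y).natAbs < q := fun x hx y hy => by
    have hxa := hS x hx a ha
    have hya := hS y hy a ha
    unfold circDist at hxa hya
    simp only [f]
    rw [← valMinAbs_eq_of_intCast_eq (z := x - y) (m := (x - a).valMinAbs - (y - a).valMinAbs)
      (by simp) (by omega)]
    exact hS x hx y hy
  have hinj : Set.InjOn f S := fun x _ y _ hxy => by
    simpa [f] using congrArg (fun m : ℤ => (m : ZMod N)) hxy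
  rw [← Finset.card_image_of_injOn hinj]
  exact Int.card_le_of_pairwise_natAbs_sub_lt _ (by simpa using hf)

end ZMod

open ZMod

def farGraph (N q : ℕ) : SimpleGraph (ZMod N) := circulantGraph {z | q ≤ z.valMinAbs.natAbs}

section farGraph

variable {N q : ℕ}

theorem farGraph_adj {x y : ZMod N} :
    (farGraph N q).Adj x y ↔ x ≠ y ∧ q ≤ circDist x y := by
  rw [farGraph, circulantGraph_adj, circDist, ← neg_sub x y]
  simp only [Set.mem_ofPred_eq, natAbs_valMinAbs_neg, or_self]

theorem circDist_lt_of_not_farGraph_adj {x y : ZMod N} (hne : x ≠ y)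
    (h : ¬(farGraph N q).Adj x y) : circDist x y < q :=
  lt_of_not_ge fun hle => h (farGraph_adj.2 ⟨hne, hle⟩)

variable [NeZero N]

def farGraph.blockColoring (hq : 0 < q) (t : ZMod N) : (farGraph N q).Coloring ℕ :=
  Coloring.mk (fun x => (x - t).val / q) fun {x y} hadj hxy => by
    have := circDist_lt_of_val_div_eq hq hxy
    rw [circDist_sub_right] at this
    exact (farGraph_adj.1 hadj).2.not_gt this

theorem farGraph_colorable (hq : 0 < q) {m : ℕ} (hN : N ≤ m * q) :
    (farGraph N q).Colorable m :=
  (colorable_iff_exists_bdd_nat_coloring m).2 ⟨farGraph.blockColoring hq 0, fun x =>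
    (Nat.div_lt_iff_lt_mul hq).2 (by simpa using x.val_lt.trans_le hN)⟩

theorem farGraph_not_colorable (hq : 0 < q) (hN : 4 * q < N) {m : ℕ} (hm : m * q < N) :
    ¬(farGraph N q).Colorable m := by
  rintro ⟨C⟩
  obtain ⟨i, hi⟩ := Fintype.exists_lt_card_fiber_of_mul_lt_card C (by simpa using hm)
  refine hi.not_ge (card_le_of_pairwise_circDist_lt hN _ fun x hx y hy => ?_)
  obtain rfl | hne := eq_or_ne x y
  · simpa [circDist] using hq
  simp only [Finset.mem_filter, Finset.mem_univ, true_and] at hx hy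
  exact circDist_lt_of_not_farGraph_adj hne fun hadj => C.valid hadj (hx.trans hy.symm)

theorem farGraph_twoP2_free (hN : 4 * q < N) : SGFree (farGraph N q) twoP2 := by
  refine ⟨fun f => ?_⟩
  have far : ∀ i j, twoP2.Adj i j → q ≤ circDist (f i) (f j) := fun i j h =>
    (farGraph_adj.1 (f.map_rel_iff.2 h)).2
  have close : ∀ i j, i ≠ j → ¬twoP2.Adj i j → circDist (f i) (f j) < q := fun i j hne h =>
    circDist_lt_of_not_farGraph_adj (f.injective.ne hne) (mt f.map_rel_iff.1 h)
  refine (le_circDist_of_two_far_pairs hN (far 0 1 ?_) (far 2 3 ?_) (close 0 2 ?_ ?_)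
    (close 0 3 ?_ ?_) (close 1 2 ?_ ?_)).not_gt (close 1 3 ?_ ?_) <;> simp [twoP2]

end farGraph

theorem farGraph_induce_compl_colorable {N q m : ℕ} (hq : 0 < q) (hN : N ≤ m * q)
    (v : ZMod (N + 1)) : ((farGraph (N + 1) q).induce {v}ᶜ).Colorable m := by
  refine (colorable_iff_exists_bdd_nat_coloring m).2
    ⟨(farGraph.blockColoring hq (v + 1)).comp (Embedding.induce _).toHom, fun x => ?_⟩
  have hx : x.1 - (v + 1) ≠ -1 := fun h => x.2 (Set.mem_singleton_iff.2 (by linear_combination h))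
  exact (Nat.div_lt_iff_lt_mul hq).2 ((val_lt_of_ne_neg_one hx).trans_le hN)

def twoP2EmbeddingPathGraph : twoP2 ↪g pathGraph 5 where
  toFun := ![0, 1, 3, 4]
  inj' := by decide
  map_rel_iff' := by
    intro a b
    fin_cases a <;> fin_cases b <;> simp [twoP2, pathGraph_adj]

theorem SGFree.of_embedding {V W W' : Type*} {G : SimpleGraph V} {H : SimpleGraph W}
    {H' : SimpleGraph W'} (e : H' ↪g H) (h : SGFree G H') : SGFree G H :=
  ⟨fun f => h.false (e.trans f)⟩

/-- For every fixed `k ≥ 5` and every `n`, there is a `k`-vertex-critical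
`(P5, 2P2)`-free graph with more than `n` vertices. -/
theorem stmt_1 (k : ℕ) (hk : 5 ≤ k) (n : ℕ) :
    ∃ (V : Type) (inst : Fintype V) (G : SimpleGraph V),
      IsKVertexCritical G k ∧ SGFree G (pathGraph 5) ∧ SGFree G twoP2 ∧
        n < @Fintype.card V inst := by
  obtain ⟨m, rfl⟩ : ∃ m, k = m + 1 := ⟨k - 1, by omega⟩
  have hq : 0 < n + 1 := n.succ_pos
  have hN : 4 * (n + 1) < m * (n + 1) + 1 := by nlinarith
  refine ⟨ZMod (m * (n + 1) + 1), inferInstance, farGraph _ (n + 1), ⟨?_, fun v => ?_⟩,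
    (farGraph_twoP2_free hN).of_embedding twoP2EmbeddingPathGraph, farGraph_twoP2_free hN, ?_⟩
  · rw [Nat.cast_add_one, chromaticNumber_eq_iff_colorable_not_colorable]
    exact ⟨farGraph_colorable hq (by nlinarith), farGraph_not_colorable hq hN (by omega)⟩
  · calc _ ≤ (m : ℕ∞) := (farGraph_induce_compl_colorable hq le_rfl v).chromaticNumber_le
      _ < _ := by exact_mod_cast m.lt_succ_self
  · rw [ZMod.card]
    nlinarith
end

section
/- For every fixed integer k ≥ 5 and every natural number n, there exists a k-vertex-critical (P5, P1+K3)-free graph with more than n vertices. In particular, there are infinitely many k-vertex-critical (P5, P1+K3)-free graphs. -/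
/-
Let `C_m = farCirculant m` be the circulant graph on `ℤ/(4m+1)` in which two vertices are
adjacent iff their circular distance is at least `m`. An independent set of `C_m` lies in an arc
of `m` consecutive vertices, so `χ(C_m) > 4`; deleting any vertex leaves `4m` vertices that split
into four such arcs, so `C_m` is `5`-vertex-critical. Joining a clique `K_r` keeps
vertex-criticality and raises `χ` by `r`. `P₅` and `P₁ + K₃` have no dominating vertex, so an
induced copy in the join avoids the clique, and inside `C_m` such a copy is ruled out by linear
arithmetic on the positions `0, …, 4m` of its vertices.
-/

open SimpleGraph

open Finset

lemma ZMod.val_sub_add_val_eq_or {N : ℕ} [NeZero N] (x y : ZMod N) :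
    (x - y).val + y.val = x.val ∨ (x - y).val + y.val = x.val + N := by
  rcases lt_or_ge ((x - y).val + y.val) N with h | h
  · left
    rw [← ZMod.val_add_of_lt h, sub_add_cancel]
  · right
    rw [ZMod.val_add_val_of_le h, sub_add_cancel]

lemma Nat.lt_add_of_div_eq_div {a b m : ℕ} (hm : 0 < m) (h : a / m = b / m) : a < b + m := by
  have ha := Nat.div_add_mod a m
  have hb := Nat.div_add_mod b m
  have := Nat.mod_lt a hm
  rw [h] at ha
  generalize m * (b / m) = q at ha hb
  omega

lemma Finset.card_le_of_forall_lt_add {s : Finset ℕ} {d : ℕ}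
    (h : ∀ x ∈ s, ∀ y ∈ s, x < y + d) : #s ≤ d := by
  rcases s.eq_empty_or_nonempty with rfl | hs
  · simp
  · calc #s ≤ #(Ico (s.min' hs) (s.min' hs + d)) :=
          card_le_card fun x hx => mem_Ico.2 ⟨s.min'_le x hx, h x hx _ (s.min'_mem hs)⟩
      _ = d := by simp

namespace SimpleGraph

variable {V W U : Type*}

theorem card_le_mul_of_colorable [Fintype V] {G : SimpleGraph V} {n a : ℕ} (hG : G.Colorable n)
    (hα : ∀ s : Finset V, G.IsIndepSet s → #s ≤ a) : Fintype.card V ≤ n * a := by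
  classical
  obtain ⟨c⟩ := hG
  by_contra! h
  obtain ⟨i, hi⟩ := Fintype.exists_lt_card_fiber_of_mul_lt_card c (by simpa using h)
  refine (hα _ ?_).not_gt hi
  simpa [Coloring.colorClass] using c.isIndepSet_colorClass i

theorem Colorable.of_induce_compl_singleton {G : SimpleGraph V} {v : V} {n : ℕ}
    (h : (G.induce {v}ᶜ).Colorable n) : G.Colorable (n + 1) := by
  classical
  obtain ⟨c⟩ := h
  let c' : G.Coloring (Option (Fin n)) :=
    Coloring.mk (fun x => if hx : x = v then none else some (c ⟨x, hx⟩)) fun {x y} hxy => by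
      by_cases hx : x = v <;> by_cases hy : y = v
      · exact absurd (hx.trans hy.symm) hxy.ne
      · simp [hx, hy]
      · simp [hx, hy]
      · simpa [hx, hy] using c.valid (show (G.induce {v}ᶜ).Adj ⟨x, hx⟩ ⟨y, hy⟩ from hxy)
  simpa using c'.colorable

theorem _root_.isKVertexCritical_add_one_iff {G : SimpleGraph V} {n : ℕ} :
    IsKVertexCritical G (n + 1) ↔
      G.Colorable (n + 1) ∧ ¬G.Colorable n ∧ ∀ v, (G.induce {v}ᶜ).Colorable n := by
  simp only [IsKVertexCritical, Nat.cast_add_one, chromaticNumber_eq_iff_colorable_not_colorable,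
    ENat.lt_add_one_iff (ENat.natCast_ne_top n), chromaticNumber_le_iff_colorable, and_assoc]

section Join

def join (G : SimpleGraph V) (H : SimpleGraph W) : SimpleGraph (V ⊕ W) where
  Adj u v := match u, v with
    | .inl x, .inl y => G.Adj x y
    | .inr x, .inr y => H.Adj x y
    | _, _ => True
  symm := ⟨by
    rintro (x | x) (y | y) h
    exacts [h.symm, trivial, trivial, h.symm]⟩
  loopless := ⟨by
    rintro (x | x) h
    exacts [G.loopless.irrefl x h, H.loopless.irrefl x h]⟩

variable {G : SimpleGraph V} {H : SimpleGraph W}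

@[simp] lemma join_adj_inl_inl {x y : V} : (G.join H).Adj (.inl x) (.inl y) ↔ G.Adj x y := .rfl
@[simp] lemma join_adj_inr_inr {x y : W} : (G.join H).Adj (.inr x) (.inr y) ↔ H.Adj x y := .rfl
@[simp] lemma join_adj_inl_inr {x : V} {y : W} : (G.join H).Adj (.inl x) (.inr y) := trivial
@[simp] lemma join_adj_inr_inl {x : W} {y : V} : (G.join H).Adj (.inr x) (.inl y) := trivial

def Coloring.join {α β : Type*} (cG : G.Coloring α) (cH : H.Coloring β) :
    (G.join H).Coloring (α ⊕ β) :=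
  Coloring.mk (Sum.map cG cH) <| by
    rintro (x | x) (y | y) h
    · simpa using cG.valid h
    · simp
    · simp
    · simpa using cH.valid h

theorem Colorable.join {a b : ℕ} (hG : G.Colorable a) (hH : H.Colorable b) :
    (G.join H).Colorable (a + b) := by
  simpa using (hG.some.join hH.some).colorable

def joinInduceHom (s : Set (V ⊕ W)) :
    (G.join H).induce s →g (G.induce (Sum.inl ⁻¹' s)).join (H.induce (Sum.inr ⁻¹' s)) where
  toFun
    | ⟨.inl x, hx⟩ => .inl ⟨x, hx⟩
    | ⟨.inr y, hy⟩ => .inr ⟨y, hy⟩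
  map_rel' := by
    rintro ⟨x | x, hx⟩ ⟨y | y, hy⟩ h <;> exact h

theorem Colorable.induce_join (s : Set (V ⊕ W)) {a b : ℕ}
    (hG : (G.induce (Sum.inl ⁻¹' s)).Colorable a)
    (hH : (H.induce (Sum.inr ⁻¹' s)).Colorable b) :
    ((G.join H).induce s).Colorable (a + b) :=
  (hG.join hH).of_hom (joinInduceHom s)

theorem Colorable.exists_add_eq_of_join {n : ℕ} (h : (G.join H).Colorable n) :
    ∃ a b, a + b = n ∧ G.Colorable a ∧ H.Colorable b := by
  classical
  obtain ⟨c⟩ := h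
  let S : Finset (Fin n) := {i | ∃ x, c (.inl x) = i}
  refine ⟨#S, #Sᶜ, ?_, ?_, ?_⟩
  · rw [card_compl, Fintype.card_fin]
    have := S.card_le_univ
    rw [Fintype.card_fin] at this
    omega
  · refine Fintype.card_coe S ▸ (Coloring.mk (fun x => (⟨c (.inl x), by simp [S]⟩ : S))
      fun hxy h => ?_).colorable
    exact c.valid (join_adj_inl_inl.2 hxy) (congrArg Subtype.val h)
  · refine Fintype.card_coe Sᶜ ▸ (Coloring.mk (fun y => (⟨c (.inr y), ?_⟩ : ↥Sᶜ))
      fun hxy h => ?_).colorable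
    · simp only [S, mem_compl, mem_filter, mem_univ, true_and, not_exists]
      exact fun x hx => c.valid join_adj_inl_inr hx
    · exact c.valid (join_adj_inr_inr.2 hxy) (congrArg Subtype.val h)

theorem _root_.IsKVertexCritical.join_top [Fintype W] {n : ℕ}
    (hG : IsKVertexCritical G (n + 1)) :
    IsKVertexCritical (G.join (⊤ : SimpleGraph W)) (n + 1 + Fintype.card W) := by
  obtain ⟨hcol, hncol, hdel⟩ := isKVertexCritical_add_one_iff.1 hG
  rw [add_right_comm, isKVertexCritical_add_one_iff]
  refine ⟨add_right_comm n 1 _ ▸ hcol.join (colorable_of_fintype ⊤), fun h => ?_, ?_⟩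
  · obtain ⟨a, b, hab, hGa, hKb⟩ := h.exists_add_eq_of_join
    have : Fintype.card W ≤ b := by
      simpa using IsClique.card_le_of_colorable (s := univ) (by simp) hKb
    exact hncol (hGa.mono (by omega))
  · rintro (v | w)
    · have hs : Sum.inl ⁻¹' ({.inl v}ᶜ : Set (V ⊕ W)) = {v}ᶜ := by ext; simp
      exact (hs ▸ hdel v).induce_join _
        ((colorable_of_fintype ⊤).of_hom (Embedding.induce _).toHom)
    · classical
      have hs : Sum.inr ⁻¹' ({.inr w}ᶜ : Set (V ⊕ W)) = {w}ᶜ := by ext; simp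
      have hK : ((⊤ : SimpleGraph W).induce {w}ᶜ).Colorable (Fintype.card W - 1) := by
        simpa [filter_ne'] using colorable_of_fintype ((⊤ : SimpleGraph W).induce {w}ᶜ)
      have hW : 0 < Fintype.card W := Fintype.card_pos_iff.2 ⟨w⟩
      refine (Colorable.induce_join _ (hcol.of_hom (Embedding.induce _).toHom) (hs ▸ hK)).mono ?_
      omega

theorem _root_.SGFree.join_top {F : SimpleGraph U} (hF : ∀ a, ∃ b, a ≠ b ∧ ¬F.Adj a b)
    (hG : SGFree G F) : SGFree (G.join (⊤ : SimpleGraph W)) F := by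
  refine ⟨fun f => hG.false ?_⟩
  have hleft : ∀ a, ∃ x, f a = .inl x := by
    intro a
    obtain ⟨b, hab, hnadj⟩ := hF a
    rcases ha : f a with x | w
    · exact ⟨x, rfl⟩
    · refine (hnadj (f.map_rel_iff.1 ?_)).elim
      have hne : f a ≠ f b := f.injective.ne hab
      rw [ha] at hne ⊢
      rcases hb : f b with y | w'
      · exact join_adj_inr_inl
      · rw [hb] at hne
        exact join_adj_inr_inr.2 fun h => hne (by rw [h])
  choose g hg using hleft
  refine ⟨⟨g, fun a b h => f.injective (by rw [hg, hg, h])⟩, fun {a b} => ?_⟩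
  show G.Adj (g a) (g b) ↔ F.Adj a b
  rw [← join_adj_inl_inl (H := (⊤ : SimpleGraph W)), ← hg, ← hg, f.map_rel_iff]

end Join

section FarCirculant

variable {m : ℕ}

def farCirculant (m : ℕ) : SimpleGraph (ZMod (4 * m + 1)) :=
  circulantGraph {d | d.val ∈ Set.Icc m (2 * m)}

theorem farCirculant_adj_iff (hm : 0 < m) {x y : ZMod (4 * m + 1)} :
    (farCirculant m).Adj x y ↔
      (m ≤ (x.val : ℤ) - y.val ∧ (x.val : ℤ) - y.val ≤ 3 * m + 1) ∨
        (m ≤ (y.val : ℤ) - x.val ∧ (y.val : ℤ) - x.val ≤ 3 * m + 1) := by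
  have hxy := ZMod.val_sub_add_val_eq_or x y
  have hyx := ZMod.val_sub_add_val_eq_or y x
  have := (x - y).val_lt
  have := (y - x).val_lt
  have hne : x ≠ y ↔ x.val ≠ y.val := ZMod.val_injective _ |>.ne_iff.symm
  simp only [farCirculant, circulantGraph_adj, Set.mem_ofPred_eq, Set.mem_Icc, hne]
  omega

theorem farCirculant_adj_add_iff {x y d : ZMod (4 * m + 1)} :
    (farCirculant m).Adj (x + d) (y + d) ↔ (farCirculant m).Adj x y :=
  circulantGraph_adj_translate

theorem farCirculant_induce_compl_colorable (hm : 0 < m) (v : ZMod (4 * m + 1)) :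
    ((farCirculant m).induce {v}ᶜ).Colorable 4 := by
  have hcolor (x : ZMod (4 * m + 1)) : ((x - v).val - 1) / m < 4 := by
    have := (x - v).val_lt
    rw [Nat.div_lt_iff_lt_mul hm]
    omega
  refine ⟨Coloring.mk (fun x => ⟨((x.1 - v).val - 1) / m, hcolor x.1⟩) ?_⟩
  rintro ⟨x, hx⟩ ⟨y, hy⟩ hxy hc
  have hc' : ((x - v).val - 1) / m = ((y - v).val - 1) / m := congrArg Fin.val hc
  have hblock := Nat.lt_add_of_div_eq_div hm hc'
  have hblock' := Nat.lt_add_of_div_eq_div hm hc'.symm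
  have hx0 : (x - v).val ≠ 0 := by simpa [sub_eq_zero] using hx
  have hy0 : (y - v).val ≠ 0 := by simpa [sub_eq_zero] using hy
  have hadj : (farCirculant m).Adj (x - v) (y - v) := by
    rw [sub_eq_add_neg, sub_eq_add_neg, farCirculant_adj_add_iff]
    exact hxy
  rw [farCirculant_adj_iff hm] at hadj
  omega

theorem farCirculant_card_le_of_isIndepSet (hm : 0 < m) {s : Finset (ZMod (4 * m + 1))}
    (hs : (farCirculant m).IsIndepSet s) : #s ≤ m := by
  rcases s.eq_empty_or_nonempty with rfl | ⟨a, ha⟩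
  · simp
  -- `d` moves `a` to position `m - 1`, so the translated set lies in `[0, 2m - 2]`.
  set d : ZMod (4 * m + 1) := ((m - 1 : ℕ) : ZMod (4 * m + 1)) - a
  have hd : (a + d).val = m - 1 := by
    rw [add_sub_cancel, ZMod.val_cast_of_lt (by omega)]
  have hfar {x y : ZMod (4 * m + 1)} (hx : x ∈ s) (hy : y ∈ s) :
      ¬(farCirculant m).Adj (x + d) (y + d) := by
    rw [farCirculant_adj_add_iff]
    obtain rfl | hxy := eq_or_ne x y
    · exact (farCirculant m).loopless.irrefl x
    · exact hs hx hy hxy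
  calc #s = #(s.image fun x => (x + d).val) :=
        (card_image_of_injective _ ((ZMod.val_injective _).comp (add_left_injective d))).symm
    _ ≤ m := by
      refine card_le_of_forall_lt_add ?_
      simp only [mem_image]
      rintro _ ⟨x, hx, rfl⟩ _ ⟨y, hy, rfl⟩
      have hxa := hfar hx ha
      have hya := hfar hy ha
      have hxy := hfar hx hy
      rw [farCirculant_adj_iff hm] at hxa hya hxy
      have := (x + d).val_lt
      have := (y + d).val_lt
      omega

theorem farCirculant_not_colorable_four (hm : 0 < m) : ¬(farCirculant m).Colorable 4 := fun h => by
  have := card_le_mul_of_colorable h fun s hs => farCirculant_card_le_of_isIndepSet hm hs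
  rw [ZMod.card] at this
  omega

theorem isKVertexCritical_farCirculant (hm : 0 < m) : IsKVertexCritical (farCirculant m) 5 :=
  isKVertexCritical_add_one_iff.2
    ⟨(farCirculant_induce_compl_colorable hm 0).of_induce_compl_singleton,
      farCirculant_not_colorable_four hm, farCirculant_induce_compl_colorable hm⟩

theorem sgFree_farCirculant_pathGraph_five (hm : 0 < m) :
    SGFree (farCirculant m) (pathGraph 5) := by
  refine ⟨fun f => ?_⟩
  have hadj (i j : Fin 5) := (f.map_rel_iff (a := i) (b := j)).symm.trans (farCirculant_adj_iff hm)
  have hlt (i : Fin 5) := (f i).val_lt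
  simp [Fin.forall_fin_succ, pathGraph_adj, -ZMod.natCast_val] at hadj hlt
  omega

theorem sgFree_farCirculant_P1K3 (hm : 0 < m) : SGFree (farCirculant m) P1K3 := by
  refine ⟨fun f => ?_⟩
  have hadj (i j : Fin 4) := (f.map_rel_iff (a := i) (b := j)).symm.trans (farCirculant_adj_iff hm)
  have hlt (i : Fin 4) := (f i).val_lt
  simp [Fin.forall_fin_succ, P1K3, -ZMod.natCast_val] at hadj hlt
  omega

end FarCirculant

theorem exists_ne_not_adj_pathGraph {n : ℕ} (hn : 4 ≤ n) (a : Fin n) :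
    ∃ b, a ≠ b ∧ ¬(pathGraph n).Adj a b := by
  refine ⟨if a.val < 2 then ⟨n - 1, by omega⟩ else ⟨0, by omega⟩, ?_⟩
  split_ifs <;> simp only [ne_eq, Fin.ext_iff, pathGraph_adj] <;> omega

theorem exists_ne_not_adj_P1K3 (a : Fin 4) : ∃ b, a ≠ b ∧ ¬P1K3.Adj a b := by
  refine ⟨if a = 0 then 1 else 0, ?_⟩
  fin_cases a <;> simp [P1K3]

end SimpleGraph

/-- For every fixed `k ≥ 5` and every `n`, there is a `k`-vertex-critical
`(P5, P1 + K3)`-free graph with more than `n` vertices. -/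
theorem stmt_2 (k : ℕ) (hk : 5 ≤ k) (n : ℕ) :
    ∃ (V : Type) (inst : Fintype V) (G : SimpleGraph V),
      IsKVertexCritical G k ∧ SGFree G (pathGraph 5) ∧ SGFree G P1K3 ∧
        n < @Fintype.card V inst := by
  obtain ⟨r, rfl⟩ : ∃ r, k = 4 + 1 + r := ⟨k - 5, by omega⟩
  have hm : 0 < n + 1 := n.succ_pos
  refine ⟨ZMod (4 * (n + 1) + 1) ⊕ Fin r, inferInstance, (farCirculant (n + 1)).join ⊤,
    ?_, ?_, ?_, ?_⟩
  · simpa using (isKVertexCritical_farCirculant hm).join_top (W := Fin r)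
  · exact (sgFree_farCirculant_pathGraph_five hm).join_top
      (exists_ne_not_adj_pathGraph (by norm_num))
  · exact (sgFree_farCirculant_P1K3 hm).join_top exists_ne_not_adj_P1K3
  · rw [Fintype.card_sum, ZMod.card, Fintype.card_fin]
    omega
end

section
/- Let G be a k-vertex-critical graph. Then G has no two nonempty disjoint vertex subsets X and Y such that: (i) there is no edge between X and Y (X and Y are anticomplete to each other); (ii) χ(G[X]) ≤ χ(G[Y]); and (iii) every vertex of Y is adjacent to every vertex of N(X), where N(X) denotes the set of vertices outside X having a neighbor in X. -/
open SimpleGraph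

/-!
Pick `x ∈ X` and a `(k-1)`-coloring `φ` of `G - x`; it colors `G - X`. The colors `φ` uses
on `Y` suffice for `G[X]`, since `χ(G[X]) ≤ χ(G[Y])`. Recolor `X` with these colors: an edge
from `u ∈ X` to `z ∈ N(X)` is then properly colored, because the color of `u` is `φ y` for some
`y ∈ Y`, and `y` is adjacent to `z`. This `(k-1)`-colors `G`, a contradiction.
-/

namespace SimpleGraph

variable {V α : Type*} {G : SimpleGraph V}

open Classical in
noncomputable def Coloring.piecewise {X : Set V} (C : (G.induce X).Coloring α)
    (D : (G.induce Xᶜ).Coloring α)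
    (hCD : ∀ u v (hu : u ∈ X) (hv : v ∉ X), G.Adj u v → C ⟨u, hu⟩ ≠ D ⟨v, hv⟩) :
    G.Coloring α :=
  Coloring.mk (fun v => if hv : v ∈ X then C ⟨v, hv⟩ else D ⟨v, hv⟩) fun {u v} huv => by
    by_cases hu : u ∈ X <;> by_cases hv : v ∈ X <;> simp only [hu, hv, dite_true, dite_false]
    · exact C.valid huv
    · exact hCD u v hu hv huv
    · exact (hCD v u hv hu huv.symm).symm
    · exact D.valid huv

theorem exists_coloring_range_subset_of_chromaticNumber_le [Finite α] {W W' : Type*}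
    {H : SimpleGraph W} {H' : SimpleGraph W'}
    (hle : H.chromaticNumber ≤ H'.chromaticNumber) (C : H'.Coloring α) :
    ∃ D : H.Coloring α, Set.range D ⊆ Set.range C := by
  have : Fintype (Set.range C) := Fintype.ofFinite _
  let C' : H'.Coloring (Set.range C) :=
    Coloring.mk (Set.rangeFactorization C) fun h e => C.valid h (congrArg Subtype.val e)
  have hH : H.Colorable (Fintype.card (Set.range C)) :=
    chromaticNumber_le_iff_colorable.mp (hle.trans C'.colorable.chromaticNumber_le)
  refine ⟨H.recolorOfEmbedding (Function.Embedding.subtype _) (hH.toColoring le_rfl), ?_⟩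
  rintro _ ⟨w, rfl⟩
  exact Subtype.prop _

theorem colorable_of_chromaticNumber_lt {n : ℕ} (h : G.chromaticNumber < n) :
    G.Colorable (n - 1) := by
  refine chromaticNumber_le_iff_colorable.mp ?_
  exact_mod_cast ENat.le_sub_one_of_lt h

theorem Colorable.of_induce_compl {X Y : Set V} {n : ℕ} (hXY : Disjoint X Y)
    (hle : (G.induce X).chromaticNumber ≤ (G.induce Y).chromaticNumber)
    (hY : ∀ y ∈ Y, ∀ z, z ∉ X → (∃ x ∈ X, G.Adj x z) → G.Adj y z)
    (hc : (G.induce Xᶜ).Colorable n) : G.Colorable n := by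
  obtain ⟨φ⟩ := hc
  have hYX : Y ≤ Xᶜ := hXY.subset_compl_left
  obtain ⟨ψ, hψ⟩ := exists_coloring_range_subset_of_chromaticNumber_le hle
    (φ.comp (induceHomOfLE G hYX).toHom)
  refine ⟨ψ.piecewise φ fun u v hu hv huv => ?_⟩
  obtain ⟨y, hy⟩ := hψ ⟨⟨u, hu⟩, rfl⟩
  rw [← hy]
  exact φ.valid (hY y y.2 v hv ⟨u, hu, huv⟩)

end SimpleGraph

theorem stmt_5_general {V : Type} (G : SimpleGraph V) (k : ℕ)
    (hG : IsKVertexCritical G k) :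
    ¬ ∃ X Y : Set V, X.Nonempty ∧ Y.Nonempty ∧ Disjoint X Y ∧
        (∀ x ∈ X, ∀ y ∈ Y, ¬ G.Adj x y) ∧
        (G.induce X).chromaticNumber ≤ (G.induce Y).chromaticNumber ∧
        (∀ y ∈ Y, ∀ z : V, z ∉ X → (∃ x ∈ X, G.Adj x z) → G.Adj y z) := by
  rintro ⟨X, Y, ⟨x, hx⟩, -, hXY, -, hle, hY⟩
  obtain ⟨hχ, hcrit⟩ := hG
  have hk : k ≠ 0 := by rintro rfl; exact not_lt_zero (hcrit x)
  have hXc : Xᶜ ≤ ({x}ᶜ : Set V) := Set.compl_subset_compl.mpr (Set.singleton_subset_iff.mpr hx)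
  have hcol : G.Colorable (k - 1) :=
    .of_induce_compl hXY hle hY
      ((colorable_of_chromaticNumber_lt (hcrit x)).of_hom (induceHomOfLE G hXc).toHom)
  have := hcol.chromaticNumber_le
  rw [hχ, Nat.cast_le] at this
  omega

/-- A `k`-vertex-critical graph has no two nonempty disjoint anticomplete sets `X, Y`
with `χ(G[X]) ≤ χ(G[Y])` such that `Y` is complete to `N(X)`. -/
theorem stmt_5 {V : Type} [Fintype V] (G : SimpleGraph V) (k : ℕ)
    (hG : IsKVertexCritical G k) :
    ¬ ∃ X Y : Set V, X.Nonempty ∧ Y.Nonempty ∧ Disjoint X Y ∧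
        (∀ x ∈ X, ∀ y ∈ Y, ¬ G.Adj x y) ∧
        (G.induce X).chromaticNumber ≤ (G.induce Y).chromaticNumber ∧
        (∀ y ∈ Y, ∀ z : V, z ∉ X → (∃ x ∈ X, G.Adj x z) → G.Adj y z) :=
  stmt_5_general G k hG
end

section
/- Let G be a connected graph that is P5-free, K4-free, W5-free and F-free, and let v1,...,v7 be vertices of G inducing a 7-antihole, where v_i v_{i+1} (indices modulo 7) are exactly the nonedges among them. Then every vertex x of G outside {v1,...,v7} satisfies, for some index i (modulo 7): either N(x) ∩ {v1,...,v7} = {v_{i−1}, v_i, v_{i+1}}, or N(x) ∩ {v1,...,v7} = {v1,...,v7} \ {v_{i−1}, v_i, v_{i+1}}. -/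
open SimpleGraph

/-!
Let `S ⊆ ℤ/7` be the set of antihole vertices adjacent to `x`. Three local configurations
are impossible: `x` complete to a triangle `{j, j+2, j+4}` (a `K4`); `x` adjacent to
`j+1, j+2` but not to `j, j+3`, since then `x, v_{j+1}, v_{j+3}, v_j, v_{j+2}` is a `C5`
to which `v_{j+5}` is complete, giving a `W5` or an `F`; and `x` adjacent to `j+1` alone
among `j, …, j+3`, which extends the induced path `v_{j+1} v_{j+3} v_j v_{j+2}` to a `P5`.
A finite check shows that the only nonempty sets avoiding all three are the consecutive
triples and their complements. Each of these contains some `j` with `j+1, j+3 ∉ S`, so a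
vertex `z` with no neighbour on the antihole cannot be adjacent to `x`
(`z x v_j v_{j+3} v_{j+1}` would be a `P5`); by connectivity, `S` is never empty.
-/

variable {V W : Type*} {G : SimpleGraph V}

theorem SGFree.not_forall_adj_iff {H : SimpleGraph W} (hG : SGFree G H)
    (hH : Function.Injective H.neighborSet) (f : W → V) :
    ¬ ∀ a b, G.Adj (f a) (f b) ↔ H.Adj a b := fun hf =>
  hG.false ⟨⟨f, fun a b hab => hH <| Set.ext fun c => (hf a c).symm.trans (hab ▸ hf b c)⟩,
    hf _ _⟩

theorem neighborSet_injective_iff {H : SimpleGraph W} :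
    Function.Injective H.neighborSet ↔ ∀ a b, (∀ c, H.Adj a c ↔ H.Adj b c) → a = b :=
  ⟨fun hH _ _ hab => hH (Set.ext hab), fun hH a b hab => hH a b (Set.ext_iff.1 hab)⟩

theorem pathGraph_five_neighborSet_injective : Function.Injective (pathGraph 5).neighborSet := by
  simp only [neighborSet_injective_iff, pathGraph_adj]
  decide

theorem completeGraph_four_neighborSet_injective :
    Function.Injective (completeGraph (Fin 4)).neighborSet :=
  neighborSet_injective_iff.2 (by decide)

theorem W5_neighborSet_injective : Function.Injective W5.neighborSet := by
  simp only [neighborSet_injective_iff, W5, fromEdgeSet_adj, Set.mem_insert_iff,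
    Set.mem_singleton_iff]
  decide

theorem Fgraph_neighborSet_injective : Function.Injective Fgraph.neighborSet := by
  simp only [neighborSet_injective_iff, Fgraph, fromEdgeSet_adj, Set.mem_insert_iff,
    Set.mem_singleton_iff]
  decide

def IsAntihole7 (G : SimpleGraph V) (v : Fin 7 → V) : Prop :=
  ∀ i j, G.Adj (v i) (v j) ↔ (i ≠ j ∧ j ≠ i + 1 ∧ i ≠ j + 1)

namespace IsAntihole7

variable {v : Fin 7 → V} {x y z : V}

theorem adj (h : IsAntihole7 G v) (i j : Fin 7) :
    G.Adj (v i) (v j) ↔ (i ≠ j ∧ j ≠ i + 1 ∧ i ≠ j + 1) :=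
  h i j

theorem rotate (h : IsAntihole7 G v) (j : Fin 7) : IsAntihole7 G (fun k => v (j + k)) := by
  intro a b
  rw [h.adj]
  simp only [add_assoc, ne_eq, add_right_inj]

theorem false_of_adj_zero_two_four (hK4 : SGFree G (completeGraph (Fin 4)))
    (h : IsAntihole7 G v) (h0 : G.Adj x (v 0)) (h2 : G.Adj x (v 2)) (h4 : G.Adj x (v 4)) :
    False := by
  refine hK4.not_forall_adj_iff completeGraph_four_neighborSet_injective ![x, v 0, v 2, v 4] ?_
  intro a b
  fin_cases a <;> fin_cases b <;> simp [h.adj, h0, h2, h4, G.adj_comm (v _) x]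

theorem false_of_adj_one_two (hW5 : SGFree G W5) (hF : SGFree G Fgraph)
    (h : IsAntihole7 G v) (h1 : G.Adj x (v 1)) (h2 : G.Adj x (v 2))
    (h0 : ¬ G.Adj x (v 0)) (h3 : ¬ G.Adj x (v 3)) : False := by
  by_cases h5 : G.Adj x (v 5)
  · refine hW5.not_forall_adj_iff W5_neighborSet_injective ![x, v 1, v 3, v 0, v 2, v 5] ?_
    intro a b
    fin_cases a <;> fin_cases b <;>
      simp [h.adj, h0, h1, h2, h3, h5, G.adj_comm (v _) x, W5, fromEdgeSet_adj]
  · refine hF.not_forall_adj_iff Fgraph_neighborSet_injective ![v 1, v 3, v 0, v 2, x, v 5] ?_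
    intro a b
    fin_cases a <;> fin_cases b <;>
      simp [h.adj, h0, h1, h2, h3, h5, G.adj_comm (v _) x, Fgraph, fromEdgeSet_adj]

theorem false_of_adj_only_one (hP5 : SGFree G (pathGraph 5)) (h : IsAntihole7 G v)
    (h1 : G.Adj x (v 1)) (h0 : ¬ G.Adj x (v 0)) (h2 : ¬ G.Adj x (v 2))
    (h3 : ¬ G.Adj x (v 3)) : False := by
  refine hP5.not_forall_adj_iff pathGraph_five_neighborSet_injective ![x, v 1, v 3, v 0, v 2] ?_
  intro a b
  fin_cases a <;> fin_cases b <;> simp [h.adj, h0, h1, h2, h3, G.adj_comm (v _) x, pathGraph_adj]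

theorem false_of_adj_of_forall_not_adj (hP5 : SGFree G (pathGraph 5)) (h : IsAntihole7 G v)
    (hz : ∀ k, ¬ G.Adj z (v k)) (hzy : G.Adj z y)
    (h0 : G.Adj y (v 0)) (h1 : ¬ G.Adj y (v 1)) (h3 : ¬ G.Adj y (v 3)) : False := by
  refine hP5.not_forall_adj_iff pathGraph_five_neighborSet_injective ![z, y, v 0, v 3, v 1] ?_
  intro a b
  fin_cases a <;> fin_cases b <;>
    simp [h.adj, hz, hzy, hzy.symm, h0, h1, h3, G.adj_comm (v _) y, G.adj_comm (v _) z,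
      pathGraph_adj]

end IsAntihole7

def Admissible (S : Finset (Fin 7)) : Prop :=
  ∀ j : Fin 7, ¬ (j ∈ S ∧ j + 2 ∈ S ∧ j + 4 ∈ S) ∧
    (j + 1 ∈ S → j + 2 ∈ S → j ∈ S ∨ j + 3 ∈ S) ∧
    (j + 1 ∈ S → j ∈ S ∨ j + 2 ∈ S ∨ j + 3 ∈ S)

instance : DecidablePred Admissible := fun S => by
  unfold Admissible
  infer_instance

namespace Admissible

variable {S : Finset (Fin 7)}

theorem eq_triple_or_compl (hS : Admissible S) (hne : S.Nonempty) :
    ∃ i : Fin 7,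
      (∀ j, j ∈ S ↔ (j = i - 1 ∨ j = i ∨ j = i + 1)) ∨
      (∀ j, j ∈ S ↔ ¬ (j = i - 1 ∨ j = i ∨ j = i + 1)) := by
  revert S
  decide +kernel

theorem exists_mem_add_one_add_three_notMem (hS : Admissible S) (hne : S.Nonempty) :
    ∃ j ∈ S, j + 1 ∉ S ∧ j + 3 ∉ S := by
  revert S
  decide +kernel

end Admissible

namespace IsAntihole7

variable {v : Fin 7 → V}

theorem admissible [DecidableRel G.Adj] (hP5 : SGFree G (pathGraph 5))
    (hK4 : SGFree G (completeGraph (Fin 4))) (hW5 : SGFree G W5) (hF : SGFree G Fgraph)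
    (h : IsAntihole7 G v) (x : V) : Admissible {j | G.Adj x (v j)} := by
  intro j
  have hj := h.rotate j
  simp only [Finset.mem_filter, Finset.mem_univ, true_and]
  refine ⟨fun ⟨h0, h2, h4⟩ => hj.false_of_adj_zero_two_four hK4 (by simpa using h0) h2 h4,
    fun h1 h2 => ?_, fun h1 => ?_⟩
  · by_contra! h03
    exact hj.false_of_adj_one_two hW5 hF h1 h2 (by simpa using h03.1) h03.2
  · by_contra! h023
    exact hj.false_of_adj_only_one hP5 h1 (by simpa using h023.1) h023.2.1 h023.2.2

theorem exists_adj (hconn : G.Connected) (hP5 : SGFree G (pathGraph 5))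
    (hK4 : SGFree G (completeGraph (Fin 4))) (hW5 : SGFree G W5) (hF : SGFree G Fgraph)
    (h : IsAntihole7 G v) (x : V) : ∃ j, G.Adj x (v j) := by
  classical
  by_contra! hx
  have hv0 : ¬ ∀ k, ¬ G.Adj (v 0) (v k) := fun hv0 => hv0 2 ((h.adj 0 2).2 (by decide))
  obtain ⟨d, -, hz, hy⟩ :=
    ((hconn.preconnected x (v 0)).some).exists_boundary_dart {z | ∀ k, ¬ G.Adj z (v k)} hx hv0
  obtain ⟨k, hk⟩ : ∃ k, G.Adj d.snd (v k) := by simpa using hy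
  obtain ⟨j, hj, hj1, hj3⟩ :=
    (h.admissible hP5 hK4 hW5 hF d.snd).exists_mem_add_one_add_three_notMem
      ⟨k, by simpa using hk⟩
  simp only [Finset.mem_filter, Finset.mem_univ, true_and] at hj hj1 hj3
  exact (h.rotate j).false_of_adj_of_forall_not_adj hP5 (fun k => hz (j + k)) d.adj
    (by simpa using hj) hj1 hj3

end IsAntihole7

theorem stmt_10_general {V : Type} (G : SimpleGraph V)
    (hconn : G.Connected)
    (hP5 : SGFree G (pathGraph 5))
    (hK4 : SGFree G (completeGraph (Fin 4)))
    (hW5 : SGFree G W5)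
    (hF : SGFree G Fgraph)
    (v : Fin 7 → V)
    (hadj : ∀ i j : Fin 7, G.Adj (v i) (v j) ↔ (i ≠ j ∧ j ≠ i + 1 ∧ i ≠ j + 1))
    (x : V) :
    ∃ i : Fin 7,
      (∀ j : Fin 7, G.Adj x (v j) ↔ (j = i - 1 ∨ j = i ∨ j = i + 1)) ∨
      (∀ j : Fin 7, G.Adj x (v j) ↔ ¬ (j = i - 1 ∨ j = i ∨ j = i + 1)) := by
  classical
  have h : IsAntihole7 G v := hadj
  obtain ⟨k, hk⟩ := h.exists_adj hconn hP5 hK4 hW5 hF x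
  simpa using (h.admissible hP5 hK4 hW5 hF x).eq_triple_or_compl ⟨k, by simpa using hk⟩

/-- In a connected `(P5, K4, W5, F)`-free graph, every vertex outside a 7-antihole
`v₁,…,v₇` has neighborhood on the antihole equal to `{v_{i-1}, v_i, v_{i+1}}` or to its
complement in the antihole, for some `i`. -/
theorem stmt_10 {V : Type} [Fintype V] (G : SimpleGraph V)
    (hconn : G.Connected)
    (hP5 : SGFree G (pathGraph 5))
    (hK4 : SGFree G (completeGraph (Fin 4)))
    (hW5 : SGFree G W5)
    (hF : SGFree G Fgraph)
    (v : Fin 7 → V) (hv : Function.Injective v)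
    (hadj : ∀ i j : Fin 7, G.Adj (v i) (v j) ↔ (i ≠ j ∧ j ≠ i + 1 ∧ i ≠ j + 1))
    (x : V) (hx : x ∉ Set.range v) :
    ∃ i : Fin 7,
      (∀ j : Fin 7, G.Adj x (v j) ↔ (j = i - 1 ∨ j = i ∨ j = i + 1)) ∨
      (∀ j : Fin 7, G.Adj x (v j) ↔ ¬ (j = i - 1 ∨ j = i ∨ j = i + 1)) :=
  stmt_10_general G hconn hP5 hK4 hW5 hF v hadj x
end

section
/- Let G be a graph that is P5-free, K4-free, W5-free and F-free, and let v1,...,v7 induce a 7-antihole in G, with v_i v_{i+1} (indices modulo 7) the nonedges among them. For each i let T_i be the set of vertices outside {v1,...,v7} whose neighborhood on the antihole is exactly {v_{i−1}, v_i, v_{i+1}}. Then for each i (indices modulo 7), T_i is anticomplete to T_{i+1} (no edges between them) and T_i is complete to T_{i+3} (all edges present between them). -/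
open SimpleGraph

/-! Rotating the antihole reduces both claims to `i = 0`. There, an edge between `x ∈ T 0` and
`y ∈ T 1` would make `x y v₂ v₅ v₃` an induced `P5`, and a nonedge between `x ∈ T 0` and
`y ∈ T 3` would make `x v₁ v₅ v₂ y` one. -/

namespace SGFree

variable {V W : Type*} {G : SimpleGraph V} {H : SimpleGraph W}

theorem false_of_adj_iff (hH : SGFree G H) (htwin : ∀ a b, (∀ c, H.Adj a c ↔ H.Adj b c) → a = b)
    (f : W → V) (hf : ∀ a b, G.Adj (f a) (f b) ↔ H.Adj a b) : False :=
  hH.false ⟨⟨f, fun a b hab => htwin a b fun c => by rw [← hf, ← hf, hab]⟩, hf _ _⟩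

theorem false_of_induced_path_five (hP5 : SGFree G (pathGraph 5)) {x₀ x₁ x₂ x₃ x₄ : V}
    (h₀₁ : G.Adj x₀ x₁) (h₁₂ : G.Adj x₁ x₂) (h₂₃ : G.Adj x₂ x₃) (h₃₄ : G.Adj x₃ x₄)
    (h₀₂ : ¬G.Adj x₀ x₂) (h₀₃ : ¬G.Adj x₀ x₃) (h₀₄ : ¬G.Adj x₀ x₄)
    (h₁₃ : ¬G.Adj x₁ x₃) (h₁₄ : ¬G.Adj x₁ x₄) (h₂₄ : ¬G.Adj x₂ x₄) : False := by
  refine hP5.false_of_adj_iff (by simp only [pathGraph_adj]; decide) ![x₀, x₁, x₂, x₃, x₄]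
    fun a b => ?_
  fin_cases a <;> fin_cases b <;>
    simp [pathGraph_adj, *, h₀₁.symm, h₁₂.symm, h₂₃.symm, h₃₄.symm, mt G.adj_symm]

end SGFree

namespace SimpleGraph

variable {V : Type*} (G : SimpleGraph V)

section Rotation

variable {n : ℕ} [NeZero n]

def IsAntihole (v : Fin n → V) : Prop :=
  ∀ i j, G.Adj (v i) (v j) ↔ (i ≠ j ∧ j ≠ i + 1 ∧ i ≠ j + 1)

-- `x ∈ T k` in the paper's notation, except that `x ∉ Set.range v` is not required.
def AdjExactlyAround (v : Fin n → V) (x : V) (k : Fin n) : Prop :=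
  ∀ j, G.Adj x (v j) ↔ (j = k - 1 ∨ j = k ∨ j = k + 1)

variable {G} {v : Fin n → V}

theorem IsAntihole.rotate (hv : G.IsAntihole v) (i : Fin n) : G.IsAntihole (fun j => v (i + j)) :=
  fun j k => (hv _ _).trans <| by simp only [add_assoc, ne_eq, add_right_inj]

theorem AdjExactlyAround.rotate {x : V} {k : Fin n} (hx : G.AdjExactlyAround v x k) (i : Fin n) :
    G.AdjExactlyAround (fun j => v (i + j)) x (k - i) :=
  fun j => by simp only [hx (i + j)]; grind

end Rotation

variable {G} {v : Fin 7 → V} {x y : V}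

theorem IsAntihole.not_adj_of_adjExactlyAround_add_one (hP5 : SGFree G (pathGraph 5))
    (hv : G.IsAntihole v) {i : Fin 7} (hx : G.AdjExactlyAround v x i)
    (hy : G.AdjExactlyAround v y (i + 1)) : ¬G.Adj x y := by
  have hv := hv.rotate i
  have hx : G.AdjExactlyAround (fun j => v (i + j)) x 0 := by simpa using hx.rotate i
  have hy : G.AdjExactlyAround (fun j => v (i + j)) y 1 := by simpa using hy.rotate i
  exact fun hxy => hP5.false_of_induced_path_five hxy ((hy 2).2 (by decide))
    ((hv 2 5).2 (by decide)) ((hv 5 3).2 (by decide)) (mt (hx 2).1 (by decide))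
    (mt (hx 5).1 (by decide)) (mt (hx 3).1 (by decide)) (mt (hy 5).1 (by decide))
    (mt (hy 3).1 (by decide)) (mt (hv 2 3).1 (by decide))

theorem IsAntihole.adj_of_adjExactlyAround_add_three (hP5 : SGFree G (pathGraph 5))
    (hv : G.IsAntihole v) {i : Fin 7} (hx : G.AdjExactlyAround v x i)
    (hy : G.AdjExactlyAround v y (i + 3)) : G.Adj x y := by
  have hv := hv.rotate i
  have hx : G.AdjExactlyAround (fun j => v (i + j)) x 0 := by simpa using hx.rotate i
  have hy : G.AdjExactlyAround (fun j => v (i + j)) y 3 := by simpa using hy.rotate i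
  by_contra hxy
  exact hP5.false_of_induced_path_five ((hx 1).2 (by decide)) ((hv 1 5).2 (by decide))
    ((hv 5 2).2 (by decide)) ((hy 2).2 (by decide)).symm (mt (hx 5).1 (by decide))
    (mt (hx 2).1 (by decide)) hxy (mt (hv 1 2).1 (by decide))
    (fun h => absurd ((hy 1).1 h.symm) (by decide))
    (fun h => absurd ((hy 5).1 h.symm) (by decide))

end SimpleGraph

theorem stmt_11_general {V : Type} (G : SimpleGraph V)
    (hP5 : SGFree G (pathGraph 5))
    (v : Fin 7 → V)
    (hadj : ∀ i j : Fin 7, G.Adj (v i) (v j) ↔ (i ≠ j ∧ j ≠ i + 1 ∧ i ≠ j + 1))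
    (T : Fin 7 → Set V)
    (hT : ∀ (i : Fin 7) (x : V), x ∈ T i ↔
      x ∉ Set.range v ∧ ∀ j : Fin 7, G.Adj x (v j) ↔ (j = i - 1 ∨ j = i ∨ j = i + 1)) :
    ∀ i : Fin 7,
      (∀ x ∈ T i, ∀ y ∈ T (i + 1), ¬ G.Adj x y) ∧
      (∀ x ∈ T i, ∀ y ∈ T (i + 3), G.Adj x y) := by
  have hv : G.IsAntihole v := hadj
  intro i
  exact ⟨fun x hx y hy => hv.not_adj_of_adjExactlyAround_add_one hP5 ((hT _ x).1 hx).2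
      ((hT _ y).1 hy).2,
    fun x hx y hy => hv.adj_of_adjExactlyAround_add_three hP5 ((hT _ x).1 hx).2 ((hT _ y).1 hy).2⟩

/-- With `T i` the set of vertices outside a 7-antihole whose neighborhood on it is
exactly `{v_{i-1}, v_i, v_{i+1}}`: `T i` is anticomplete to `T (i+1)` and complete to
`T (i+3)`. -/
theorem stmt_11 {V : Type} [Fintype V] (G : SimpleGraph V)
    (hP5 : SGFree G (pathGraph 5))
    (hK4 : SGFree G (completeGraph (Fin 4)))
    (hW5 : SGFree G W5)
    (hF : SGFree G Fgraph)
    (v : Fin 7 → V) (hv : Function.Injective v)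
    (hadj : ∀ i j : Fin 7, G.Adj (v i) (v j) ↔ (i ≠ j ∧ j ≠ i + 1 ∧ i ≠ j + 1))
    (T : Fin 7 → Set V)
    (hT : ∀ (i : Fin 7) (x : V), x ∈ T i ↔
      x ∉ Set.range v ∧ ∀ j : Fin 7, G.Adj x (v j) ↔ (j = i - 1 ∨ j = i ∨ j = i + 1)) :
    ∀ i : Fin 7,
      (∀ x ∈ T i, ∀ y ∈ T (i + 1), ¬ G.Adj x y) ∧
      (∀ x ∈ T i, ∀ y ∈ T (i + 3), G.Adj x y) :=
  stmt_11_general G hP5 v hadj T hT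
end

section
/- Let G be a graph that is P5-free, K4-free, W5-free and F-free, and let v1,...,v7 induce a 7-antihole in G, with v_i v_{i+1} (indices modulo 7) the nonedges among them. For each i let T_i be the set of vertices outside the antihole whose neighborhood on {v1,...,v7} is exactly {v_{i−1}, v_i, v_{i+1}}, and let F_i be the set of vertices outside the antihole whose neighborhood on {v1,...,v7} is exactly {v1,...,v7} \ {v_{i−1}, v_i, v_{i+1}}. Then for each i (indices modulo 7), F_i is complete to T_{i−1} ∪ T_i ∪ T_{i+1}, and F_i is anticomplete to T_{i+3}. -/
open SimpleGraph

/-!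
Shift indices so that `i = 0`; then `x ∈ F₀` sees exactly `v₂, …, v₅`. If `x` missed
`y ∈ T₀`, then `v₁ y v₀ v₂ x` would be an induced `P₅`; if it missed `y ∈ T₆` (resp. `y ∈ T₁`),
then `v₆ v₄ x v₅ y` (resp. `v₁ v₃ x v₂ y`) would be an induced `C₅` of which `v₂` (resp. `v₅`)
sees all vertices but `y`, an induced `F`. If `x` saw `y ∈ T₃`, then `x y v₂ v₄` would be a `K₄`.
All these adjacencies are read off the nine-vertex pattern formed by the antihole, `x` and `y`.
-/

instance (n : ℕ) : DecidableRel (pathGraph n).Adj := fun _ _ => decidable_of_iff' _ pathGraph_adj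

instance : DecidableRel Fgraph.Adj := inferInstanceAs (DecidableRel (fromEdgeSet _).Adj)

section Patterns

variable {V U W : Type*} {G : SimpleGraph V} {H : SimpleGraph W}

/-- Distinct vertices of `H` have distinct neighbourhoods, so a map reproducing the adjacencies
of `H` is automatically injective, hence an induced copy of `H`. -/
theorem SGFree.false_of_pattern (hfree : SGFree G H)
    (hH : ∀ a b, (∀ c, H.Adj a c ↔ H.Adj b c) → a = b)
    {g : U → V} {R : U → U → Prop} (hg : ∀ p q, G.Adj (g p) (g q) ↔ R p q)
    (φ : W → U) (hφ : ∀ a b, R (φ a) (φ b) ↔ H.Adj a b) : False := by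
  have hf : ∀ a b, G.Adj (g (φ a)) (g (φ b)) ↔ H.Adj a b := fun a b => (hg _ _).trans (hφ a b)
  have hinj : Function.Injective (g ∘ φ) := fun a b hab =>
    hH a b fun c => by rw [← hf, ← hf, show g (φ a) = g (φ b) from hab]
  exact hfree.false ⟨⟨g ∘ φ, hinj⟩, hf _ _⟩

def extendByTwo (R : U → U → Prop) (A B : Finset U) (e : Prop) : U ⊕ Fin 2 → U ⊕ Fin 2 → Prop
  | .inl c, .inl d => R c d
  | .inl c, .inr k => c ∈ ![A, B] k
  | .inr k, .inl c => c ∈ ![A, B] k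
  | .inr k, .inr l => k ≠ l ∧ e

instance [DecidableEq U] {R : U → U → Prop} [DecidableRel R] {A B : Finset U} {e : Prop}
    [Decidable e] : DecidableRel (extendByTwo R A B e)
  | .inl c, .inl d => inferInstanceAs (Decidable (R c d))
  | .inl c, .inr k => inferInstanceAs (Decidable (c ∈ ![A, B] k))
  | .inr k, .inl c => inferInstanceAs (Decidable (c ∈ ![A, B] k))
  | .inr k, .inr l => inferInstanceAs (Decidable (k ≠ l ∧ e))

theorem adj_sumElim_iff_extendByTwo {u : U → V} {R : U → U → Prop} {A B : Finset U} {x y : V}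
    {e : Prop} (hu : ∀ c d, G.Adj (u c) (u d) ↔ R c d) (hx : ∀ c, G.Adj x (u c) ↔ c ∈ A)
    (hy : ∀ c, G.Adj y (u c) ↔ c ∈ B) (hxy : G.Adj x y ↔ e) :
    ∀ p q, G.Adj (Sum.elim u ![x, y] p) (Sum.elim u ![x, y] q) ↔ extendByTwo R A B e p q
  | .inl c, .inl d => hu c d
  | .inl c, .inr k => by
    fin_cases k
    · exact G.adj_comm _ _ |>.trans (hx c)
    · exact G.adj_comm _ _ |>.trans (hy c)
  | .inr k, .inl c => by
    fin_cases k
    · exact hx c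
    · exact hy c
  | .inr k, .inr l => by
    fin_cases k <;> fin_cases l <;> simp [extendByTwo, hxy, G.adj_comm y x]

end Patterns

def antiholeAdj (c d : Fin 7) : Prop := c ≠ d ∧ d ≠ c + 1 ∧ c ≠ d + 1

instance : DecidableRel antiholeAdj := fun _ _ => inferInstanceAs (Decidable (_ ∧ _ ∧ _))

def consecutiveTriple (t : Fin 7) : Finset (Fin 7) := {t - 1, t, t + 1}

section Antihole

variable {V : Type*} {G : SimpleGraph V} {u : Fin 7 → V} {x y : V}

theorem adj_of_trace_compl_triple_of_trace_triple (hP5 : SGFree G (pathGraph 5))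
    (hF : SGFree G Fgraph) (hu : ∀ c d, G.Adj (u c) (u d) ↔ antiholeAdj c d)
    (hx : ∀ c, G.Adj x (u c) ↔ c ∈ (consecutiveTriple 0)ᶜ) {t : Fin 7} (ht : t = 6 ∨ t = 0 ∨ t = 1)
    (hy : ∀ c, G.Adj y (u c) ↔ c ∈ consecutiveTriple t) : G.Adj x y := by
  by_contra hxy
  have hpat := adj_sumElim_iff_extendByTwo hu hx hy (iff_false_intro hxy)
  rcases ht with rfl | rfl | rfl
  · exact hF.false_of_pattern (by decide) hpat ![.inl 6, .inl 4, .inr 0, .inl 5, .inr 1, .inl 2]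
      (by decide)
  · exact hP5.false_of_pattern (by decide) hpat ![.inl 1, .inr 1, .inl 0, .inl 2, .inr 0]
      (by decide)
  · exact hF.false_of_pattern (by decide) hpat ![.inl 1, .inl 3, .inr 0, .inl 2, .inr 1, .inl 5]
      (by decide)

theorem not_adj_of_trace_compl_triple_of_trace_triple_three
    (hK4 : SGFree G (completeGraph (Fin 4))) (hu : ∀ c d, G.Adj (u c) (u d) ↔ antiholeAdj c d)
    (hx : ∀ c, G.Adj x (u c) ↔ c ∈ (consecutiveTriple 0)ᶜ)
    (hy : ∀ c, G.Adj y (u c) ↔ c ∈ consecutiveTriple 3) : ¬ G.Adj x y := fun hxy =>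
  hK4.false_of_pattern (by decide) (adj_sumElim_iff_extendByTwo hu hx hy (iff_true_intro hxy))
    ![.inr 0, .inr 1, .inl 2, .inl 4] (by decide)

end Antihole

theorem stmt_12_general {V : Type} (G : SimpleGraph V)
    (hP5 : SGFree G (pathGraph 5))
    (hK4 : SGFree G (completeGraph (Fin 4)))
    (hF : SGFree G Fgraph)
    (v : Fin 7 → V)
    (hadj : ∀ i j : Fin 7, G.Adj (v i) (v j) ↔ (i ≠ j ∧ j ≠ i + 1 ∧ i ≠ j + 1))
    (T : Fin 7 → Set V)
    (hT : ∀ (i : Fin 7) (x : V), x ∈ T i ↔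
      x ∉ Set.range v ∧ ∀ j : Fin 7, G.Adj x (v j) ↔ (j = i - 1 ∨ j = i ∨ j = i + 1))
    (Fs : Fin 7 → Set V)
    (hFs : ∀ (i : Fin 7) (x : V), x ∈ Fs i ↔
      x ∉ Set.range v ∧ ∀ j : Fin 7, G.Adj x (v j) ↔ ¬ (j = i - 1 ∨ j = i ∨ j = i + 1)) :
    ∀ i : Fin 7,
      (∀ x ∈ Fs i, ∀ y ∈ T (i - 1) ∪ T i ∪ T (i + 1), G.Adj x y) ∧
      (∀ x ∈ Fs i, ∀ y ∈ T (i + 3), ¬ G.Adj x y) := by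
  intro i
  set u : Fin 7 → V := fun c => v (i + c)
  have hu : ∀ c d, G.Adj (u c) (u d) ↔ antiholeAdj c d := fun c d => by
    simp only [u, hadj, antiholeAdj, add_assoc, ne_eq, add_right_inj]
  have hx : ∀ x ∈ Fs i, ∀ c, G.Adj x (u c) ↔ c ∈ (consecutiveTriple 0)ᶜ := fun x hx c => by
    simp [u, ((hFs i x).1 hx).2, consecutiveTriple, sub_eq_add_neg]
  have hy : ∀ t, ∀ y ∈ T (i + t), ∀ c, G.Adj y (u c) ↔ c ∈ consecutiveTriple t :=
    fun t y hy c => by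
      simp [u, ((hT (i + t) y).1 hy).2, consecutiveTriple, add_sub_assoc, add_assoc]
  refine ⟨fun x hxF y hyT => ?_, fun x hxF y hyT =>
    not_adj_of_trace_compl_triple_of_trace_triple_three hK4 hu (hx x hxF) (hy 3 y hyT)⟩
  have hcomplete {t : Fin 7} (ht : t = 6 ∨ t = 0 ∨ t = 1) (hyT : y ∈ T (i + t)) : G.Adj x y :=
    adj_of_trace_compl_triple_of_trace_triple hP5 hF hu (hx x hxF) ht (hy t y hyT)
  rcases hyT with (hyT | hyT) | hyT
  · exact hcomplete (.inl rfl) (by rwa [sub_eq_add_neg] at hyT)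
  · exact hcomplete (.inr (.inl rfl)) (by rwa [add_zero])
  · exact hcomplete (.inr (.inr rfl)) hyT

/-- With `T i` and `Fs i` the sets of vertices outside a 7-antihole whose neighborhood
on it is exactly `{v_{i-1}, v_i, v_{i+1}}`, resp. its complement in the antihole:
`Fs i` is complete to `T (i-1) ∪ T i ∪ T (i+1)` and anticomplete to `T (i+3)`. -/
theorem stmt_12 {V : Type} [Fintype V] (G : SimpleGraph V)
    (hP5 : SGFree G (pathGraph 5))
    (hK4 : SGFree G (completeGraph (Fin 4)))
    (hW5 : SGFree G W5)
    (hF : SGFree G Fgraph)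
    (v : Fin 7 → V) (hv : Function.Injective v)
    (hadj : ∀ i j : Fin 7, G.Adj (v i) (v j) ↔ (i ≠ j ∧ j ≠ i + 1 ∧ i ≠ j + 1))
    (T : Fin 7 → Set V)
    (hT : ∀ (i : Fin 7) (x : V), x ∈ T i ↔
      x ∉ Set.range v ∧ ∀ j : Fin 7, G.Adj x (v j) ↔ (j = i - 1 ∨ j = i ∨ j = i + 1))
    (Fs : Fin 7 → Set V)
    (hFs : ∀ (i : Fin 7) (x : V), x ∈ Fs i ↔
      x ∉ Set.range v ∧ ∀ j : Fin 7, G.Adj x (v j) ↔ ¬ (j = i - 1 ∨ j = i ∨ j = i + 1)) :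
    ∀ i : Fin 7,
      (∀ x ∈ Fs i, ∀ y ∈ T (i - 1) ∪ T i ∪ T (i + 1), G.Adj x y) ∧
      (∀ x ∈ Fs i, ∀ y ∈ T (i + 3), ¬ G.Adj x y) :=
  stmt_12_general G hP5 hK4 hF v hadj T hT Fs hFs
end

section
/- For every fixed integer k ≥ 1, there are only finitely many k-vertex-critical (P1+P3)-free graphs; that is, there exists a natural number N (depending only on k) such that every k-vertex-critical (P1+P3)-free graph has at most N vertices. -/
open SimpleGraph

/-!
Once `|V| > 2k`, a colour class of a `k`-colouring contains three pairwise non-adjacent vertices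
`a, b, c`. Let `Qa = {a} ∪ (N(a) \ N(b))` and `Qb = {b} ∪ (N(b) \ N(a))`. Freeness of `P1 + P3`
(applied with `b` or `c` as the isolated vertex) makes `Qa` and `Qb` cliques and forces every
vertex outside `Qa` with a neighbour in `Qa` to be adjacent to all of `Qb`. Hence, if
`|Qa| ≤ |Qb|`, mapping `Qa` injectively into `Qb` and fixing all other vertices is a homomorphism
`G → G - a`, so `χ(G) ≤ χ(G - a)`, which is impossible in a vertex-critical graph.
-/

open Set

namespace SimpleGraph

variable {V : Type*} {G : SimpleGraph V}

def privateNeighborSet (G : SimpleGraph V) (a b : V) : Set V :=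
  insert a (G.neighborSet a \ G.neighborSet b)

lemma mem_privateNeighborSet {a b x : V} :
    x ∈ G.privateNeighborSet a b ↔ x = a ∨ (G.Adj a x ∧ ¬G.Adj b x) := by
  simp [privateNeighborSet]

/-- The homomorphism moves `Q` injectively into `R` and fixes every other vertex. -/
theorem nonempty_hom_induce_compl_of_isClique {a : V} {Q R : Set V} (haQ : a ∈ Q)
    (haR : a ∉ R) (hR : G.IsClique R) (hQ : Q.Finite) (hcard : Q.encard ≤ R.encard)
    (hdom : ∀ q ∈ Q, ∀ w ∉ Q, G.Adj q w → ∀ r ∈ R, G.Adj r w) :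
    Nonempty (G →g G.induce {a}ᶜ) := by
  classical
  have : Nonempty V := ⟨a⟩
  obtain ⟨φ, hφR, hφ⟩ := hQ.exists_injOn_of_encard_le hcard
  let σ : V → V := fun v => if v ∈ Q then φ v else v
  have hσ : ∀ v, σ v ≠ a := by
    intro v
    by_cases hv : v ∈ Q
    · simp only [σ, if_pos hv]
      exact fun h => haR (h ▸ hφR hv)
    · simp only [σ, if_neg hv]
      exact fun h => hv (h ▸ haQ)
  refine ⟨⟨fun v => ⟨σ v, hσ v⟩, fun {u w} huw => ?_⟩⟩
  show G.Adj (σ u) (σ w)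
  by_cases hu : u ∈ Q <;> by_cases hw : w ∈ Q <;> simp only [σ, hu, hw, if_true, if_false]
  · exact hR (hφR hu) (hφR hw) fun h => huw.ne (hφ hu hw h)
  · exact hdom u hu w hw huw _ (hφR hu)
  · exact (hdom w hw u hu huw.symm _ (hφR hw)).symm
  · exact huw

end SimpleGraph

namespace SGFree

variable {V : Type*} {G : SimpleGraph V}

/-- In a `(P1 + P3)`-free graph the non-neighbours of any vertex induce a disjoint union of
cliques. -/
theorem P1P3_adj_of_adj_of_adj (hfree : SGFree G P1P3) {a x y z : V} (hxy : G.Adj x y)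
    (hyz : G.Adj y z) (hxz : x ≠ z) (nax : ¬G.Adj a x) (nay : ¬G.Adj a y)
    (naz : ¬G.Adj a z) : G.Adj x z := by
  by_contra nxz
  have hax : a ≠ x := fun h => nay (h ▸ hxy)
  have hay : a ≠ y := fun h => nax (h ▸ hxy.symm)
  have haz : a ≠ z := fun h => nay (h ▸ hyz.symm)
  have hxy' := hxy.ne
  have hyz' := hyz.ne
  refine hfree.false ⟨⟨![a, x, y, z], fun i j hij => ?_⟩, fun {i j} => ?_⟩
  · fin_cases i <;> fin_cases j <;> simp_all
  · show G.Adj (![a, x, y, z] i) (![a, x, y, z] j) ↔ P1P3.Adj i j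
    fin_cases i <;> fin_cases j <;> simp_all [P1P3, G.adj_comm]

variable (hfree : SGFree G P1P3) {a b c : V}
include hfree

theorem P1P3_adj_of_adj_of_adj_of_indep (hab : a ≠ b) (nab : ¬G.Adj a b) (nac : ¬G.Adj a c)
    (nbc : ¬G.Adj b c) {x : V} (hxa : G.Adj x a) (hxb : G.Adj x b) : G.Adj x c := by
  by_contra nxc
  exact nab <| hfree.P1P3_adj_of_adj_of_adj hxa.symm hxb hab (fun h => nac h.symm)
    (fun h => nxc h.symm) (fun h => nbc h.symm)

theorem P1P3_isClique_privateNeighborSet (nab : ¬G.Adj a b) :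
    G.IsClique (G.privateNeighborSet a b) := by
  refine isClique_insert.mpr ⟨fun x hx y hy hxy => ?_, fun x hx _ => hx.1⟩
  exact hfree.P1P3_adj_of_adj_of_adj (a := b) hx.1.symm hy.1 hxy hx.2 (fun h => nab h.symm) hy.2

theorem P1P3_adj_and_adj_of_adj_privateNeighborSet (hac : a ≠ c) (hbc : b ≠ c)
    (nab : ¬G.Adj a b) (nac : ¬G.Adj a c) (nbc : ¬G.Adj b c) {x w : V}
    (hx : x ∈ G.privateNeighborSet a b) (hw : w ∉ G.privateNeighborSet a b)
    (hxw : G.Adj x w) : G.Adj a w ∧ G.Adj b w := by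
  rw [mem_privateNeighborSet] at hx hw
  push Not at hw
  obtain ⟨hwa, hw⟩ := hw
  rcases hx with rfl | ⟨hax, nbx⟩
  · exact ⟨hxw, hw hxw⟩
  have hbw : G.Adj b w := by
    by_contra nbw
    exact nbw <| hw <| hfree.P1P3_adj_of_adj_of_adj hax hxw hwa.symm
      (fun h => nab h.symm) nbx nbw
  refine ⟨?_, hbw⟩
  by_contra naw
  have ncx : ¬G.Adj c x := fun hcx =>
    nbx (hfree.P1P3_adj_of_adj_of_adj_of_indep hac nac nab (fun h => nbc h.symm)
      hax.symm hcx.symm).symm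
  have ncw : ¬G.Adj c w := fun hcw =>
    naw (hfree.P1P3_adj_of_adj_of_adj_of_indep hbc nbc (fun h => nab h.symm)
      (fun h => nac h.symm) hbw.symm hcw.symm).symm
  exact naw <| hfree.P1P3_adj_of_adj_of_adj hax hxw hwa.symm (fun h => nac h.symm) ncx ncw

theorem P1P3_adj_of_mem_privateNeighborSet (hab : a ≠ b) (hac : a ≠ c) (hbc : b ≠ c)
    (nab : ¬G.Adj a b) (nac : ¬G.Adj a c) (nbc : ¬G.Adj b c) {w y : V}
    (haw : G.Adj a w) (hbw : G.Adj b w) (hy : y ∈ G.privateNeighborSet b a) : G.Adj y w := by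
  rcases mem_privateNeighborSet.mp hy with rfl | ⟨hby, nay⟩
  · exact hbw
  by_contra nyw
  have hwc : G.Adj w c := hfree.P1P3_adj_of_adj_of_adj_of_indep hab nab nac nbc haw.symm hbw.symm
  have nyc : ¬G.Adj y c := fun hyc =>
    nay (hfree.P1P3_adj_of_adj_of_adj_of_indep hbc nbc (fun h => nab h.symm)
      (fun h => nac h.symm) hby.symm hyc).symm
  exact nac <| hfree.P1P3_adj_of_adj_of_adj haw hwc hac (fun h => nay h.symm) nyw nyc

theorem P1P3_nonempty_hom_induce_compl [Finite V] (hab : a ≠ b) (hac : a ≠ c) (hbc : b ≠ c)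
    (nab : ¬G.Adj a b) (nac : ¬G.Adj a c) (nbc : ¬G.Adj b c)
    (hcard : (G.privateNeighborSet a b).encard ≤ (G.privateNeighborSet b a).encard) :
    Nonempty (G →g G.induce {a}ᶜ) := by
  refine nonempty_hom_induce_compl_of_isClique (mem_insert a _) ?_
    (hfree.P1P3_isClique_privateNeighborSet fun h => nab h.symm) (toFinite _) hcard ?_
  · rw [mem_privateNeighborSet]
    exact fun h => h.elim hab fun h => nab h.1.symm
  · intro q hq w hw hqw r hr
    obtain ⟨haw, hbw⟩ :=
      hfree.P1P3_adj_and_adj_of_adj_privateNeighborSet hac hbc nab nac nbc hq hw hqw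
    exact hfree.P1P3_adj_of_mem_privateNeighborSet hab hac hbc nab nac nbc haw hbw hr

end SGFree

theorem SimpleGraph.Colorable.exists_indep_triple {V : Type*} [Fintype V] {G : SimpleGraph V}
    {k : ℕ} (hG : G.Colorable k) (hcard : 2 * k < Fintype.card V) :
    ∃ a b c, a ≠ b ∧ a ≠ c ∧ b ≠ c ∧ ¬G.Adj a b ∧ ¬G.Adj a c ∧ ¬G.Adj b c := by
  classical
  obtain ⟨C⟩ := hG
  obtain ⟨y, hy⟩ := Fintype.exists_lt_card_fiber_of_mul_lt_card (f := C) (n := 2)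
    (by simpa [mul_comm] using hcard)
  obtain ⟨a, ha, b, hb, c, hc, hab, hac, hbc⟩ := Finset.two_lt_card.mp hy
  simp only [Finset.mem_filter, Finset.mem_univ, true_and] at ha hb hc
  exact ⟨a, b, c, hab, hac, hbc, fun h => C.valid h (ha.trans hb.symm),
    fun h => C.valid h (ha.trans hc.symm), fun h => C.valid h (hb.trans hc.symm)⟩

theorem IsKVertexCritical.isEmpty_hom_induce_compl {V : Type*} {G : SimpleGraph V} {k : ℕ}
    (hG : IsKVertexCritical G k) (a : V) : IsEmpty (G →g G.induce {a}ᶜ) :=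
  ⟨fun f => (chromaticNumber_mono_of_hom f).not_gt ((hG.2 a).trans_eq hG.1.symm)⟩

theorem stmt_14_general (k : ℕ) :
    ∃ N : ℕ, ∀ (V : Type) [Fintype V] (G : SimpleGraph V),
      IsKVertexCritical G k → SGFree G P1P3 → Fintype.card V ≤ N := by
  refine ⟨2 * k, fun V _ G hcrit hfree => ?_⟩
  by_contra! hcard
  obtain ⟨a, b, c, hab, hac, hbc, nab, nac, nbc⟩ :=
    (chromaticNumber_le_iff_colorable.mp hcrit.1.le).exists_indep_triple hcard
  rcases le_total (G.privateNeighborSet a b).encard (G.privateNeighborSet b a).encard with h | h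
  · obtain ⟨f⟩ := hfree.P1P3_nonempty_hom_induce_compl hab hac hbc nab nac nbc h
    exact (hcrit.isEmpty_hom_induce_compl a).false f
  · obtain ⟨f⟩ := hfree.P1P3_nonempty_hom_induce_compl hab.symm hbc hac (fun h => nab h.symm)
      nbc nac h
    exact (hcrit.isEmpty_hom_induce_compl b).false f

/-- For every fixed `k ≥ 1`, there is a uniform bound on the number of vertices of
`k`-vertex-critical `(P1 + P3)`-free graphs. -/
theorem stmt_14 (k : ℕ) (hk : 1 ≤ k) :
    ∃ N : ℕ, ∀ (V : Type) [Fintype V] (G : SimpleGraph V),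
      IsKVertexCritical G k → SGFree G P1P3 → Fintype.card V ≤ N :=
  stmt_14_general k
end

section
/- For every fixed integer k ≥ 1, there are only finitely many k-vertex-critical (P5, P2+2P1)-free graphs; that is, there exists a natural number N (depending only on k) such that every k-vertex-critical (P5, P2+2P1)-free graph has at most N vertices. -/
open SimpleGraph

/-!
A `k`-vertex-critical graph is `k`-colourable, so it suffices to show that its independent sets
have at most `k` vertices; then `|V| ≤ k²`. Criticality forbids a vertex whose neighbourhood lies
inside that of another vertex, so for distinct `s, t` in an independent set `T` some `x` is
adjacent to `t` but not to `s`, and `P2 + 2P1`-freeness forces `x` to see all of `T \ {s}`.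
For `s ≠ s'` the resulting vertices `x_s`, `x_s'` are adjacent: otherwise
`s - x_s' - r - x_s - s'` is an induced `P5` for any third `r ∈ T`. So an independent set of
size `k + 1` would yield a clique of size `k + 1`.
-/

namespace SimpleGraph

variable {V : Type*} {G : SimpleGraph V}

theorem Colorable.of_induce_compl_singleton_s15 {u w : V} (huw : u ≠ w)
    (hN : ∀ x, G.Adj u x → G.Adj w x) {n : ℕ} (h : (G.induce ({u}ᶜ : Set V)).Colorable n) :
    G.Colorable n := by
  classical
  -- `u` is recoloured with the colour of `w`, which sees every neighbour of `u`.
  let retract : G →g G.induce ({u}ᶜ : Set V) :=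
    { toFun := fun x => if hx : x = u then ⟨w, huw.symm⟩ else ⟨x, hx⟩
      map_rel' := by
        intro a b hab
        by_cases ha : a = u <;> by_cases hb : b = u
        · exact absurd (ha.trans hb.symm) hab.ne
        · subst ha; simpa [hb] using hN b hab
        · subst hb; simpa [ha] using (hN a hab.symm).symm
        · simpa [ha, hb] using hab }
  exact h.of_hom retract

theorem Colorable.card_le_mul [Fintype V] {n m : ℕ} (hc : G.Colorable n)
    (hind : ∀ s : Finset V, G.IsIndepSet (s : Set V) → s.card ≤ m) :
    Fintype.card V ≤ n * m := by
  classical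
  obtain ⟨C⟩ := hc
  calc Fintype.card V = (Finset.univ : Finset V).card := Finset.card_univ.symm
    _ ≤ m * (Finset.univ.image C).card :=
        Finset.card_le_mul_card_image _ _ fun c _ => hind _ <|
          (C.isIndepSet_colorClass c).mono fun x => by simp [Coloring.colorClass]
    _ ≤ m * n := Nat.mul_le_mul_left m <| by simpa using Finset.card_le_univ (Finset.univ.image C)
    _ = n * m := Nat.mul_comm m n

end SimpleGraph

namespace SGFree

variable {V : Type*} {G : SimpleGraph V}

theorem false_of_adj_iff_s15 {W : Type*} {H : SimpleGraph W} (h : SGFree G H) {f : W → V}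
    (hf : Function.Injective f) (hadj : ∀ i j, G.Adj (f i) (f j) ↔ H.Adj i j) : False :=
  IsEmpty.elim h ⟨⟨f, hf⟩, hadj _ _⟩

theorem false_of_P2plus2P1 (h : SGFree G P2plus2P1) {a b c d : V} (hab : G.Adj a b)
    (hac : ¬G.Adj a c) (had : ¬G.Adj a d) (hbc : ¬G.Adj b c) (hbd : ¬G.Adj b d)
    (hcd : ¬G.Adj c d) (hac' : a ≠ c) (had' : a ≠ d) (hcd' : c ≠ d) : False := by
  have hbc' : b ≠ c := by rintro rfl; exact hac hab
  have hbd' : b ≠ d := by rintro rfl; exact had hab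
  refine h.false_of_adj_iff_s15 (f := ![a, b, c, d]) ?_ ?_
  · intro i j hij
    fin_cases i <;> fin_cases j <;> simp_all [eq_comm]
  · intro i j
    fin_cases i <;> fin_cases j <;> simp_all [P2plus2P1, adj_comm]

theorem false_of_path5 (h : SGFree G (pathGraph 5)) {a b c d e : V} (hab : G.Adj a b)
    (hbc : G.Adj b c) (hcd : G.Adj c d) (hde : G.Adj d e) (hac : ¬G.Adj a c)
    (had : ¬G.Adj a d) (hae : ¬G.Adj a e) (hbd : ¬G.Adj b d) (hbe : ¬G.Adj b e)
    (hce : ¬G.Adj c e) : False := by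
  have hadj : ∀ i j,
      G.Adj (![a, b, c, d, e] i) (![a, b, c, d, e] j) ↔ (pathGraph 5).Adj i j := by
    intro i j
    fin_cases i <;> fin_cases j <;> simp_all [pathGraph_adj, adj_comm]
  -- Distinct vertices of a path have distinct neighbourhoods, so an induced copy is injective.
  have htwinFree : ∀ i j : Fin 5,
      (∀ l, (pathGraph 5).Adj i l ↔ (pathGraph 5).Adj j l) → i = j := by
    simp only [pathGraph_adj]; decide
  refine h.false_of_adj_iff_s15 (fun i j hij => htwinFree i j fun l => ?_) hadj
  rw [← hadj, ← hadj, hij]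

variable {T : Set V}

theorem adj_or_adj_of_isIndepSet (h : SGFree G P2plus2P1) (hT : G.IsIndepSet T) {t s p x : V}
    (ht : t ∈ T) (hs : s ∈ T) (hp : p ∈ T) (hts : t ≠ s) (htp : t ≠ p) (hsp : s ≠ p)
    (htx : G.Adj t x) : G.Adj x s ∨ G.Adj x p := by
  by_contra! hx
  exact h.false_of_P2plus2P1 htx (hT ht hs hts) (hT ht hp htp) hx.1 hx.2 (hT hs hp hsp)
    hts htp hsp

theorem adj_of_isIndepSet (h : SGFree G (pathGraph 5)) (hT : G.IsIndepSet T) {s s' r x x' : V}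
    (hs : s ∈ T) (hs' : s' ∈ T) (hr : r ∈ T) (hss' : s ≠ s') (hrs : r ≠ s) (hrs' : r ≠ s')
    (hxs : ¬G.Adj x s) (hxs' : G.Adj x s') (hxr : G.Adj x r)
    (hx's' : ¬G.Adj x' s') (hx's : G.Adj x' s) (hx'r : G.Adj x' r) : G.Adj x x' := by
  by_contra hxx'
  exact h.false_of_path5 hx's.symm hx'r hxr.symm hxs' (hT hs hr hrs.symm)
    (fun h => hxs h.symm) (hT hs hs' hss') (fun h => hxx' h.symm) hx's' (hT hr hs' hrs')

end SGFree

namespace IsKVertexCritical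

variable {V : Type*} {G : SimpleGraph V} {n : ℕ}

theorem colorable_and_not_colorable (h : IsKVertexCritical G (n + 1)) :
    G.Colorable (n + 1) ∧ ¬G.Colorable n :=
  chromaticNumber_eq_iff_colorable_not_colorable.mp (by exact_mod_cast h.1)

theorem colorable_induce_compl (h : IsKVertexCritical G (n + 1)) (v : V) :
    (G.induce ({v}ᶜ : Set V)).Colorable n :=
  chromaticNumber_le_iff_colorable.mp <|
    (ENat.lt_add_one_iff (ENat.natCast_ne_top n)).mp (by exact_mod_cast h.2 v)

theorem exists_adj_not_adj (h : IsKVertexCritical G (n + 1)) {u w : V} (huw : u ≠ w) :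
    ∃ x, G.Adj u x ∧ ¬G.Adj w x := by
  by_contra! hN
  exact h.colorable_and_not_colorable.2 <|
    Colorable.of_induce_compl_singleton_s15 huw hN (h.colorable_induce_compl u)

theorem card_le_one [Fintype V] (h : IsKVertexCritical G 1) : Fintype.card V ≤ 1 := by
  refine Fintype.card_le_one_iff.mpr fun u w => ?_
  by_contra huw
  obtain ⟨x, hux, -⟩ := h.exists_adj_not_adj huw
  simp [colorable_one_iff.mp h.colorable_and_not_colorable.1] at hux

theorem exists_adj_iff_ne_of_isIndepSet (h : IsKVertexCritical G (n + 1))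
    (hP2 : SGFree G P2plus2P1) {T : Set V} (hT : G.IsIndepSet T) {s t : V} (hs : s ∈ T)
    (ht : t ∈ T) (hts : t ≠ s) : ∃ x, ∀ p ∈ T, G.Adj x p ↔ p ≠ s := by
  obtain ⟨x, htx, hsx⟩ := h.exists_adj_not_adj hts
  refine ⟨x, fun p hp => ⟨?_, fun hps => ?_⟩⟩
  · rintro hxp rfl
    exact hsx hxp.symm
  · rcases eq_or_ne t p with rfl | htp
    · exact htx.symm
    · exact (hP2.adj_or_adj_of_isIndepSet hT ht hs hp hts htp hps.symm htx).resolve_left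
        fun hxs => hsx hxs.symm

theorem card_le_of_isIndepSet (h : IsKVertexCritical G (n + 1)) (hn : 1 ≤ n)
    (hP5 : SGFree G (pathGraph 5)) (hP2 : SGFree G P2plus2P1) {S : Finset V}
    (hS : G.IsIndepSet (S : Set V)) : S.card ≤ n + 1 := by
  classical
  by_contra! hbig
  obtain ⟨T, hTS, hTcard⟩ := Finset.exists_subset_card_eq hbig
  have hT : G.IsIndepSet (T : Set V) := hS.mono (Finset.coe_subset.mpr hTS)
  have hf : ∀ s ∈ T, ∃ x, ∀ p ∈ T, G.Adj x p ↔ p ≠ s := fun s hs => by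
    obtain ⟨t, ht, hts⟩ := Finset.exists_mem_ne (s := T) (by omega) s
    exact h.exists_adj_iff_ne_of_isIndepSet hP2 hT hs ht hts
  choose! f hf using hf
  have hinj : Set.InjOn f T := fun s hs s' hs' hss' => by
    by_contra hne
    have hadj := (hf s hs s' hs').mpr (Ne.symm hne)
    rw [hss'] at hadj
    exact (hf s' hs' s' hs').mp hadj rfl
  have hclique : G.IsClique (T.image f : Set V) := by
    rw [Finset.coe_image]
    rintro _ ⟨s, hs, rfl⟩ _ ⟨s', hs', rfl⟩ hne
    have hss' : s ≠ s' := by rintro rfl; exact hne rfl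
    obtain ⟨r, hr, hrss'⟩ := Finset.exists_mem_notMem_of_card_lt_card
      (s := {s, s'}) (t := T) (Finset.card_le_two.trans_lt (by omega))
    simp only [Finset.mem_insert, Finset.mem_singleton, not_or] at hrss'
    exact hP5.adj_of_isIndepSet hT hs hs' hr hss' hrss'.1 hrss'.2
      (by simpa using hf s hs s hs) ((hf s hs s' hs').mpr hss'.symm) ((hf s hs r hr).mpr hrss'.1)
      (by simpa using hf s' hs' s' hs') ((hf s' hs' s hs).mpr hss') ((hf s' hs' r hr).mpr hrss'.2)
  have := hclique.card_le_of_colorable h.colorable_and_not_colorable.1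
  rw [Finset.card_image_of_injOn hinj] at this
  omega

end IsKVertexCritical

theorem stmt_15_general (k : ℕ) :
    ∃ N : ℕ, ∀ (V : Type) [Fintype V] (G : SimpleGraph V),
      IsKVertexCritical G k → SGFree G (pathGraph 5) → SGFree G P2plus2P1 →
        Fintype.card V ≤ N := by
  refine ⟨k * k, fun V _ G hcrit hP5 hP2 => ?_⟩
  obtain _ | n := k
  · simpa [Fintype.card_eq_zero_iff] using
      chromaticNumber_eq_zero_iff.mp (by exact_mod_cast hcrit.1)
  obtain rfl | hn := Nat.eq_zero_or_pos n
  · exact hcrit.card_le_one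
  · exact hcrit.colorable_and_not_colorable.1.card_le_mul fun S hS =>
      hcrit.card_le_of_isIndepSet hn hP5 hP2 hS

/-- For every fixed `k ≥ 1`, there is a uniform bound on the number of vertices of
`k`-vertex-critical `(P5, P2 + 2P1)`-free graphs. -/
theorem stmt_15 (k : ℕ) (hk : 1 ≤ k) :
    ∃ N : ℕ, ∀ (V : Type) [Fintype V] (G : SimpleGraph V),
      IsKVertexCritical G k → SGFree G (pathGraph 5) → SGFree G P2plus2P1 →
        Fintype.card V ≤ N :=
  stmt_15_general k
end

section
/- Let G be a diamond-free graph and let v1,v2,v3,v4,v5 be vertices inducing a 5-cycle in G (indices modulo 5). Then for each i, there is at most one vertex x outside {v1,...,v5} with N(x) ∩ {v1,...,v5} = {v_{i−2}, v_i, v_{i+2}}. -/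
open SimpleGraph

def diamondEmbedding {V : Type*} {G : SimpleGraph V} {a b c d : V} (hab : a ≠ b)
    (hab' : ¬G.Adj a b) (hcd : G.Adj c d) (hac : G.Adj a c) (had : G.Adj a d)
    (hbc : G.Adj b c) (hbd : G.Adj b d) : diamond ↪g G where
  toFun := ![a, b, c, d]
  inj' := by
    have := hac.ne; have := had.ne; have := hbc.ne; have := hbd.ne; have := hcd.ne
    intro i j h
    fin_cases i <;> fin_cases j <;> simp_all [eq_comm]
  map_rel_iff' := by
    intro i j
    change G.Adj (![a, b, c, d] i) (![a, b, c, d] j) ↔ _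
    fin_cases i <;> fin_cases j <;>
      simp [diamond, hab', hcd, hac, had, hbc, hbd, hcd.symm, hac.symm, had.symm, hbc.symm,
        hbd.symm, G.adj_comm b a]

theorem SGFree.adj_of_common_adj_edge {V : Type*} {G : SimpleGraph V}
    (h : SGFree G diamond) {a b c d : V} (hab : a ≠ b) (hcd : G.Adj c d)
    (hac : G.Adj a c) (had : G.Adj a d) (hbc : G.Adj b c) (hbd : G.Adj b d) : G.Adj a b := by
  by_contra hab'
  exact h.false (diamondEmbedding hab hab' hcd hac had hbc hbd)

theorem stmt_18_general {V : Type} (G : SimpleGraph V)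
    (hdiamond : SGFree G diamond)
    (v : Fin 5 → V) (hv : Function.Injective v)
    (hadj : ∀ i j : Fin 5, G.Adj (v i) (v j) ↔ (j = i + 1 ∨ i = j + 1)) :
    ∀ i : Fin 5,
      {x : V | x ∉ Set.range v ∧
        ∀ j : Fin 5, G.Adj x (v j) ↔ (j = i - 2 ∨ j = i ∨ j = i + 2)}.Subsingleton := by
  rintro i x ⟨-, hx⟩ y ⟨-, hy⟩
  by_contra hxy
  have hcycle : G.Adj (v (i - 2)) (v (i + 2)) :=
    (hadj _ _).2 (Or.inr ((by decide : ∀ j : Fin 5, j - 2 = j + 2 + 1) i))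
  have hchord : ¬G.Adj (v (i - 2)) (v i) := by
    rw [hadj]; exact (by decide : ∀ j : Fin 5, ¬(j = j - 2 + 1 ∨ j - 2 = j + 1)) i
  have hne : v (i - 2) ≠ v i := hv.ne ((by decide : ∀ j : Fin 5, j - 2 ≠ j) i)
  -- `x, y` are apexes over the edge `v (i-2) v (i+2)`, hence adjacent, and then
  -- `v (i-2), v i` are apexes over the edge `xy`.
  have hxy_adj : G.Adj x y := hdiamond.adj_of_common_adj_edge hxy hcycle
    ((hx _).2 (by simp)) ((hx _).2 (by simp)) ((hy _).2 (by simp)) ((hy _).2 (by simp))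
  exact hchord (hdiamond.adj_of_common_adj_edge hne hxy_adj
    ((hx _).2 (by simp)).symm ((hy _).2 (by simp)).symm
    ((hx _).2 (by simp)).symm ((hy _).2 (by simp)).symm)

/-- In a diamond-free graph, for each `i` there is at most one vertex outside an
induced 5-cycle `v₁,…,v₅` whose neighborhood on the cycle is exactly
`{v_{i-2}, v_i, v_{i+2}}`. -/
theorem stmt_18 {V : Type} [Fintype V] (G : SimpleGraph V)
    (hdiamond : SGFree G diamond)
    (v : Fin 5 → V) (hv : Function.Injective v)
    (hadj : ∀ i j : Fin 5, G.Adj (v i) (v j) ↔ (j = i + 1 ∨ i = j + 1)) :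
    ∀ i : Fin 5,
      {x : V | x ∉ Set.range v ∧
        ∀ j : Fin 5, G.Adj x (v j) ↔ (j = i - 2 ∨ j = i ∨ j = i + 2)}.Subsingleton :=
  stmt_18_general G hdiamond v hv hadj
end
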